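/- Min-entropy lower bound from collision probability: if P is a probability distribution on an alphabet of size B with collision probability p_c = Σ_b p_b² > 1/B, then max_b p_b ≤ (1 + √((B-1)(B·p_c - 1)))/B, i.e., H^(∞)(P) ≥ -log₂((1 + √((B-1)(B·p_c - 1)))/B). -/
import Mathlib


open Real Finset

/-- Min-entropy lower bound from the collision probability. -/
theorem min_entropy_lower_bound_collision {B : ℕ} (hB : 2 ≤ B) (p : Fin B → ℝ)
    (hp : ∀ b, 0 ≤ p b) (hsum : ∑ b, p b = 1)
    (hpc : 1 / (B : ℝ) < ∑ b, p b ^ 2) :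
    Finset.univ.sup' ⟨⟨0, by omega⟩, Finset.mem_univ _⟩ p ≤
      (1 + Real.sqrt (((B : ℝ) - 1) * ((B : ℝ) * (∑ b, p b ^ 2) - 1))) / B ∧
    -Real.logb 2 (Finset.univ.sup' ⟨⟨0, by omega⟩, Finset.mem_univ _⟩ p) ≥
      -Real.logb 2
        ((1 + Real.sqrt (((B : ℝ) - 1) * ((B : ℝ) * (∑ b, p b ^ 2) - 1))) / B) := by
  have hBpos : (0:ℝ) < B := by positivity
  have hB1 : (1:ℝ) ≤ (B:ℝ) - 1 := by
    have : (2:ℝ) ≤ B := by exact_mod_cast hB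
    linarith
  set M : ℝ := Finset.univ.sup' ⟨⟨0, by omega⟩, Finset.mem_univ _⟩ p with hM
  set pc : ℝ := ∑ b, p b ^ 2 with hpcdef
  obtain ⟨b0, -, hb0⟩ := Finset.exists_mem_eq_sup' ⟨⟨0, by omega⟩, Finset.mem_univ _⟩ p
  have hle : ∀ b, p b ≤ M := fun b => Finset.le_sup' p (Finset.mem_univ b)
  -- M ≥ 1/B > 0
  have hMB : (1:ℝ) ≤ B * M := by
    calc (1:ℝ) = ∑ b, p b := hsum.symm
    _ ≤ ∑ _b : Fin B, M := Finset.sum_le_sum fun b _ => hle b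
    _ = B * M := by simp [mul_comm]
  have hMpos : 0 < M := by nlinarith
  -- split the sums at b0
  have hsplit : pc = p b0 ^ 2 + ∑ b ∈ Finset.univ.erase b0, p b ^ 2 := by
    rw [hpcdef, ← Finset.add_sum_erase _ _ (Finset.mem_univ b0)]
  have hsplit1 : (∑ b ∈ Finset.univ.erase b0, p b) = 1 - M := by
    have := Finset.add_sum_erase Finset.univ p (Finset.mem_univ b0)
    rw [hsum] at this
    have hb0M : p b0 = M := by rw [hM, hb0]
    linarith
  have hcard : ((Finset.univ.erase b0).card : ℝ) = (B:ℝ) - 1 := by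
    rw [Finset.card_erase_of_mem (Finset.mem_univ b0)]
    simp
    rw [Nat.cast_sub (by omega)]
    simp
  have hcs : (1 - M) ^ 2 ≤ ((B:ℝ) - 1) * ∑ b ∈ Finset.univ.erase b0, p b ^ 2 := by
    have := sq_sum_le_card_mul_sum_sq (s := Finset.univ.erase b0) (f := p)
    rw [hsplit1] at this
    calc (1 - M)^2 ≤ ((Finset.univ.erase b0).card : ℝ) * ∑ b ∈ Finset.univ.erase b0, p b ^ 2 := by
          exact_mod_cast this
      _ = ((B:ℝ) - 1) * ∑ b ∈ Finset.univ.erase b0, p b ^ 2 := by rw [hcard]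
  -- key quadratic inequality
  have hquad : (B * M - 1) ^ 2 ≤ ((B:ℝ) - 1) * ((B:ℝ) * pc - 1) := by
    have hb0M : p b0 = M := by rw [hM, hb0]
    set T : ℝ := ∑ b ∈ Finset.univ.erase b0, p b ^ 2 with hT
    have hpcT : pc = M ^ 2 + T := by rw [hsplit, hb0M]
    have hcs' : (B:ℝ) * (1 - M) ^ 2 ≤ (B:ℝ) * (((B:ℝ) - 1) * T) :=
      mul_le_mul_of_nonneg_left hcs hBpos.le
    rw [hpcT]
    nlinarith [hcs']
  have hD : (0:ℝ) ≤ ((B:ℝ) - 1) * ((B:ℝ) * pc - 1) := le_trans (sq_nonneg _) hquad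
  have hsq : B * M - 1 ≤ Real.sqrt (((B:ℝ) - 1) * ((B:ℝ) * pc - 1)) := by
    calc B * M - 1 ≤ |B * M - 1| := le_abs_self _
      _ = Real.sqrt ((B * M - 1)^2) := (Real.sqrt_sq_eq_abs _).symm
      _ ≤ _ := Real.sqrt_le_sqrt hquad
  have hmain : M ≤ (1 + Real.sqrt (((B:ℝ) - 1) * ((B:ℝ) * pc - 1))) / B := by
    rw [le_div_iff₀ hBpos]
    linarith
  refine ⟨hmain, ?_⟩
  have : Real.logb 2 M ≤ Real.logb 2 ((1 + Real.sqrt (((B:ℝ) - 1) * ((B:ℝ) * pc - 1))) / B) :=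
    Real.logb_le_logb_of_le one_lt_two hMpos hmain
  linarith
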